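/- arXiv:1404.7253 — 3 statements merged into one kernel-verified Lean document; each statement's English description precedes it below -/
import Mathlib

section
/- Let d ≥ 2 and 1 ≤ r ≤ d with d − r even, and let T_{r,d} be the homogeneous polynomial of degree d in two variables with T_{r,d}(cos θ, sin θ) = cos(r θ). Then the distance from T_{r,d} to the real discriminant Δ in the Bombieri norm is dist(T_{r,d}, Δ) = min(1, r/√d). -/
open MvPolynomial Finset

noncomputable def bombieriInner (n d : ℕ) (P Q : MvPolynomial (Fin n) ℝ) : ℝ :=
  ∑ α ∈ P.support, P.coeff α * Q.coeff α *
    (((∏ i, Nat.factorial (α i) : ℕ) : ℝ) / (Nat.factorial d : ℝ))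

noncomputable def bombieriNorm (n d : ℕ) (P : MvPolynomial (Fin n) ℝ) : ℝ :=
  Real.sqrt (bombieriInner n d P P)

def realDisc (n d : ℕ) : Set (MvPolynomial (Fin n) ℝ) :=
  {P | P.IsHomogeneous d ∧ ∃ x : Fin n → ℝ, (∑ i, x i ^ 2) = 1 ∧
    eval x P = 0 ∧ ∀ i, eval x (pderiv i P) = 0}

noncomputable def distDisc (n d : ℕ) (P : MvPolynomial (Fin n) ℝ) : ℝ :=
  sInf {r | ∃ Q ∈ realDisc n d, r = bombieriNorm n d (P - Q)}

namespace DistAux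

noncomputable def w (d : ℕ) (α : Fin 2 →₀ ℕ) : ℝ :=
  ((∏ i, Nat.factorial (α i) : ℕ) : ℝ) / (Nat.factorial d : ℝ)

lemma B_eq_sum (d : ℕ) (P Q : MvPolynomial (Fin 2) ℝ) (s : Finset (Fin 2 →₀ ℕ))
    (hs : P.support ⊆ s) :
    bombieriInner 2 d P Q = ∑ α ∈ s, P.coeff α * Q.coeff α * w d α := by
  rw [bombieriInner]
  exact Finset.sum_subset hs (fun α _ hα => by
    rw [MvPolynomial.notMem_support_iff.mp hα]; ring)

lemma B_symm (d : ℕ) (P Q : MvPolynomial (Fin 2) ℝ) :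
    bombieriInner 2 d P Q = bombieriInner 2 d Q P := by
  rw [B_eq_sum d P Q (P.support ∪ Q.support) subset_union_left,
    B_eq_sum d Q P (P.support ∪ Q.support) subset_union_right]
  exact Finset.sum_congr rfl fun α _ => by ring

lemma B_add_right (d : ℕ) (P Q Q' : MvPolynomial (Fin 2) ℝ) :
    bombieriInner 2 d P (Q + Q') = bombieriInner 2 d P Q + bombieriInner 2 d P Q' := by
  unfold bombieriInner
  rw [← Finset.sum_add_distrib]
  exact Finset.sum_congr rfl fun α _ => by rw [coeff_add]; ring

lemma B_add_left (d : ℕ) (P P' Q : MvPolynomial (Fin 2) ℝ) :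
    bombieriInner 2 d (P + P') Q = bombieriInner 2 d P Q + bombieriInner 2 d P' Q := by
  rw [B_symm, B_add_right, B_symm d Q P, B_symm d Q P']

lemma B_C_mul_right (d : ℕ) (c : ℝ) (P Q : MvPolynomial (Fin 2) ℝ) :
    bombieriInner 2 d P (C c * Q) = c * bombieriInner 2 d P Q := by
  unfold bombieriInner
  rw [Finset.mul_sum]
  exact Finset.sum_congr rfl fun α _ => by rw [coeff_C_mul]; ring

lemma B_C_mul_left (d : ℕ) (c : ℝ) (P Q : MvPolynomial (Fin 2) ℝ) :
    bombieriInner 2 d (C c * P) Q = c * bombieriInner 2 d P Q := by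
  rw [B_symm, B_C_mul_right, B_symm]

lemma B_neg_right (d : ℕ) (P Q : MvPolynomial (Fin 2) ℝ) :
    bombieriInner 2 d P (-Q) = - bombieriInner 2 d P Q := by
  unfold bombieriInner
  rw [← Finset.sum_neg_distrib]
  exact Finset.sum_congr rfl fun α _ => by rw [coeff_neg]; ring

lemma B_neg_left (d : ℕ) (P Q : MvPolynomial (Fin 2) ℝ) :
    bombieriInner 2 d (-P) Q = - bombieriInner 2 d P Q := by
  rw [B_symm, B_neg_right, B_symm]

lemma B_nonneg (d : ℕ) (P : MvPolynomial (Fin 2) ℝ) : 0 ≤ bombieriInner 2 d P P := by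
  unfold bombieriInner
  apply Finset.sum_nonneg
  intro α _
  have h1 : (0:ℝ) ≤ P.coeff α * P.coeff α := mul_self_nonneg _
  have h2 : (0:ℝ) ≤ ((∏ i, Nat.factorial (α i) : ℕ) : ℝ) / (Nat.factorial d : ℝ) := by
    positivity
  exact mul_nonneg h1 h2

noncomputable def Lin (x : Fin 2 → ℝ) : MvPolynomial (Fin 2) ℝ :=
  C (x 0) * X 0 + C (x 1) * X 1

lemma Lin_homog (x : Fin 2 → ℝ) : (Lin x).IsHomogeneous 1 :=
  (isHomogeneous_C_mul_X _ _).add (isHomogeneous_C_mul_X _ _)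

lemma eval_Lin (x y : Fin 2 → ℝ) : eval y (Lin x) = x 0 * y 0 + x 1 * y 1 := by
  simp [Lin]

lemma pderiv_Lin (i : Fin 2) (x : Fin 2 → ℝ) : pderiv i (Lin x) = C (x i) := by
  fin_cases i <;>
    simp [Lin, pderiv_C_mul, pderiv_X_self, pderiv_X_of_ne]

lemma deg2 (α : Fin 2 →₀ ℕ) : Finsupp.degree α = α 0 + α 1 := by
  rw [Finsupp.degree_apply]
  rw [Finset.sum_subset (Finset.subset_univ α.support)]
  · exact Fin.sum_univ_two α
  · intro i _ hi
    exact Finsupp.notMem_support_iff.mp hi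

lemma mem_support_deg {d : ℕ} {P : MvPolynomial (Fin 2) ℝ} (hP : P.IsHomogeneous d)
    {α : Fin 2 →₀ ℕ} (hα : α ∈ P.support) : α 0 + α 1 = d := by
  rw [← deg2, Finsupp.degree_eq_weight_one]
  exact hP (MvPolynomial.mem_support_iff.mp hα)

lemma coeff_Lin_pow (x : Fin 2 → ℝ) (k : ℕ) (β : Fin 2 →₀ ℕ) :
    coeff β ((Lin x) ^ k) =
      if β 0 + β 1 = k then (k.choose (β 0) : ℝ) * x 0 ^ (β 0) * x 1 ^ (β 1) else 0 := by
  induction k generalizing β with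
  | zero =>
    rw [pow_zero]
    rcases eq_or_ne β 0 with rfl | hβ
    · simp
    · rw [coeff_one]
      rw [if_neg (Ne.symm hβ), if_neg]
      intro h
      apply hβ
      have h0 : β 0 = 0 ∧ β 1 = 0 := by omega
      ext i
      fin_cases i
      · simpa using h0.1
      · simpa using h0.2
  | succ k ih =>
    rw [pow_succ, mul_comm,
      show (Lin x) * (Lin x)^k = C (x 0) * (X 0 * (Lin x)^k) + C (x 1) * (X 1 * (Lin x)^k) by
        rw [Lin]; ring,
      coeff_add, coeff_C_mul, coeff_C_mul, coeff_X_mul', coeff_X_mul']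
    have e00 : (β - Finsupp.single 0 1 : Fin 2 →₀ ℕ) 0 = β 0 - 1 := by simp [Finsupp.tsub_apply]
    have e01 : (β - Finsupp.single 0 1 : Fin 2 →₀ ℕ) 1 = β 1 := by simp [Finsupp.tsub_apply]
    have e10 : (β - Finsupp.single 1 1 : Fin 2 →₀ ℕ) 0 = β 0 := by simp [Finsupp.tsub_apply]
    have e11 : (β - Finsupp.single 1 1 : Fin 2 →₀ ℕ) 1 = β 1 - 1 := by simp [Finsupp.tsub_apply]
    by_cases h0 : β 0 = 0 <;> by_cases h1 : β 1 = 0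
    · rw [if_neg (by simp [Finsupp.mem_support_iff, h0]),
        if_neg (by simp [Finsupp.mem_support_iff, h1]), if_neg (by omega)]
      ring
    · rw [if_neg (by simp [Finsupp.mem_support_iff, h0]),
        if_pos (by simp [Finsupp.mem_support_iff, h1]), ih, e10, e11]
      by_cases hc : β 0 + β 1 = k + 1
      · rw [if_pos (by omega), if_pos hc, h0]
        obtain ⟨m, hm⟩ : ∃ m, β 1 = m + 1 := ⟨β 1 - 1, by omega⟩
        rw [hm]
        simp [pow_succ]
        ring
      · rw [if_neg (by omega), if_neg hc]
        ring
    · rw [if_pos (by simp [Finsupp.mem_support_iff, h0]),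
        if_neg (by simp [Finsupp.mem_support_iff, h1]), ih, e00, e01]
      by_cases hc : β 0 + β 1 = k + 1
      · rw [if_pos (by omega), if_pos hc, h1]
        obtain ⟨m, hm⟩ : ∃ m, β 0 = m + 1 := ⟨β 0 - 1, by omega⟩
        have hmk : m = k := by omega
        rw [hm, hmk]
        simp [pow_succ]
        ring
      · rw [if_neg (by omega), if_neg hc]
        ring
    · rw [if_pos (by simp [Finsupp.mem_support_iff, h0]),
        if_pos (by simp [Finsupp.mem_support_iff, h1]), ih, ih, e00, e01, e10, e11]
      obtain ⟨m, hm⟩ : ∃ m, β 0 = m + 1 := ⟨β 0 - 1, by omega⟩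
      obtain ⟨l, hl⟩ : ∃ l, β 1 = l + 1 := ⟨β 1 - 1, by omega⟩
      by_cases hc : β 0 + β 1 = k + 1
      · rw [if_pos (by omega), if_pos (by omega), if_pos hc, hm, hl]
        have : (k+1).choose (m+1) = k.choose m + k.choose (m+1) := Nat.choose_succ_succ k m
        rw [this]
        simp [pow_succ]
        push_cast
        ring
      · rw [if_neg (by omega), if_neg (by omega), if_neg hc]
        ring

lemma eval_monomial2 (x : Fin 2 → ℝ) (β : Fin 2 →₀ ℕ) (c : ℝ) :
    eval x (monomial β c) = c * (x 0 ^ β 0 * x 1 ^ β 1) := by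
  rw [eval_monomial, Finsupp.prod_fintype _ _ (fun i => pow_zero _), Fin.prod_univ_two]

lemma eval_pderiv_sum (x : Fin 2 → ℝ) (P : MvPolynomial (Fin 2) ℝ) (i : Fin 2) :
    eval x (pderiv i P) =
      ∑ α ∈ P.support, eval x (pderiv i (monomial α (P.coeff α))) := by
  conv_lhs => rw [P.as_sum]
  rw [map_sum (pderiv i), map_sum (eval x)]

lemma B_p (d : ℕ) (x : Fin 2 → ℝ) (P : MvPolynomial (Fin 2) ℝ) (hP : P.IsHomogeneous d) :
    bombieriInner 2 d P ((Lin x) ^ d) = eval x P := by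
  unfold bombieriInner
  rw [eval_eq']
  apply Finset.sum_congr rfl
  intro α hα
  have hdeg := mem_support_deg hP hα
  rw [coeff_Lin_pow, if_pos hdeg, Fin.prod_univ_two, Fin.prod_univ_two]
  have key : (d.choose (α 0) * ((α 0).factorial * (α 1).factorial) : ℕ) = d.factorial := by
    have h1 : α 0 ≤ d := by omega
    have := Nat.choose_mul_factorial_mul_factorial h1
    rw [show d - α 0 = α 1 by omega] at this
    rw [← this]; ring
  have hd0 : (d.factorial : ℝ) ≠ 0 := Nat.cast_ne_zero.mpr (Nat.factorial_ne_zero d)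
  field_simp
  push_cast [← key]
  ring

lemma euler_eval (d : ℕ) (x : Fin 2 → ℝ) (P : MvPolynomial (Fin 2) ℝ)
    (hP : P.IsHomogeneous d) :
    x 0 * eval x (pderiv 0 P) + x 1 * eval x (pderiv 1 P) = d * eval x P := by
  rw [eval_pderiv_sum, eval_pderiv_sum, eval_eq', Finset.mul_sum, Finset.mul_sum,
    Finset.mul_sum, ← Finset.sum_add_distrib]
  apply Finset.sum_congr rfl
  intro α hα
  have hdeg := mem_support_deg hP hα
  rw [pderiv_monomial, pderiv_monomial, eval_monomial2, eval_monomial2, Fin.prod_univ_two]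
  have e00 : (α - Finsupp.single 0 1 : Fin 2 →₀ ℕ) 0 = α 0 - 1 := by simp [Finsupp.tsub_apply]
  have e01 : (α - Finsupp.single 0 1 : Fin 2 →₀ ℕ) 1 = α 1 := by simp [Finsupp.tsub_apply]
  have e10 : (α - Finsupp.single 1 1 : Fin 2 →₀ ℕ) 0 = α 0 := by simp [Finsupp.tsub_apply]
  have e11 : (α - Finsupp.single 1 1 : Fin 2 →₀ ℕ) 1 = α 1 - 1 := by simp [Finsupp.tsub_apply]
  rw [e00, e01, e10, e11]
  by_cases h0 : α 0 = 0 <;> by_cases h1 : α 1 = 0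
  · rw [h0, h1] at hdeg ⊢
    simp [← hdeg]
  · obtain ⟨l, hl⟩ : ∃ l, α 1 = l + 1 := ⟨α 1 - 1, by omega⟩
    rw [h0, hl] at hdeg ⊢
    simp only [Nat.add_sub_cancel, pow_succ]
    push_cast [← hdeg]
    ring
  · obtain ⟨m, hm⟩ : ∃ m, α 0 = m + 1 := ⟨α 0 - 1, by omega⟩
    rw [h1, hm] at hdeg ⊢
    simp only [Nat.add_sub_cancel, pow_succ]
    push_cast [← hdeg]
    ring
  · obtain ⟨m, hm⟩ : ∃ m, α 0 = m + 1 := ⟨α 0 - 1, by omega⟩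
    obtain ⟨l, hl⟩ : ∃ l, α 1 = l + 1 := ⟨α 1 - 1, by omega⟩
    rw [hm, hl] at hdeg ⊢
    simp only [Nat.add_sub_cancel, pow_succ]
    push_cast [← hdeg]
    ring

lemma B_q (d : ℕ) (hd : 1 ≤ d) (x τ : Fin 2 → ℝ) (P : MvPolynomial (Fin 2) ℝ)
    (hP : P.IsHomogeneous d) :
    bombieriInner 2 d P ((Lin x) ^ (d - 1) * Lin τ) =
      (τ 0 * eval x (pderiv 0 P) + τ 1 * eval x (pderiv 1 P)) / d := by
  unfold bombieriInner
  rw [eval_pderiv_sum, eval_pderiv_sum, Finset.mul_sum, Finset.mul_sum,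
    ← Finset.sum_add_distrib, Finset.sum_div]
  apply Finset.sum_congr rfl
  intro α hα
  have hdeg := mem_support_deg hP hα
  rw [show (Lin x) ^ (d-1) * Lin τ
        = C (τ 0) * (X 0 * (Lin x)^(d-1)) + C (τ 1) * (X 1 * (Lin x)^(d-1)) by
      simp only [Lin]; ring,
    coeff_add, coeff_C_mul, coeff_C_mul, coeff_X_mul', coeff_X_mul',
    pderiv_monomial, pderiv_monomial, eval_monomial2, eval_monomial2, Fin.prod_univ_two]
  have e00 : (α - Finsupp.single 0 1 : Fin 2 →₀ ℕ) 0 = α 0 - 1 := by simp [Finsupp.tsub_apply]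
  have e01 : (α - Finsupp.single 0 1 : Fin 2 →₀ ℕ) 1 = α 1 := by simp [Finsupp.tsub_apply]
  have e10 : (α - Finsupp.single 1 1 : Fin 2 →₀ ℕ) 0 = α 0 := by simp [Finsupp.tsub_apply]
  have e11 : (α - Finsupp.single 1 1 : Fin 2 →₀ ℕ) 1 = α 1 - 1 := by simp [Finsupp.tsub_apply]
  rw [e00, e01, e10, e11]
  have hd0 : (d.factorial : ℝ) ≠ 0 := Nat.cast_ne_zero.mpr (Nat.factorial_ne_zero d)
  have hdd : (d : ℝ) ≠ 0 := Nat.cast_ne_zero.mpr (by omega)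
  by_cases h0 : α 0 = 0 <;> by_cases h1 : α 1 = 0
  · exfalso; omega
  · rw [if_neg (by simp [Finsupp.mem_support_iff, h0]),
      if_pos (by simp [Finsupp.mem_support_iff, h1]),
      coeff_Lin_pow, e10, e11, if_pos (by omega)]
    obtain ⟨l, hl⟩ : ∃ l, α 1 = l + 1 := ⟨α 1 - 1, by omega⟩
    have key : ((d-1).choose (α 0) * ((α 0).factorial * (α 1).factorial) * d : ℕ)
        = α 1 * d.factorial := by
      have h1' : α 0 ≤ d - 1 := by omega
      have hc := Nat.choose_mul_factorial_mul_factorial h1'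
      rw [show d - 1 - α 0 = l by omega] at hc
      have hfd : d.factorial = d * (d-1).factorial := by
        conv_lhs => rw [show d = (d-1)+1 by omega]
        rw [Nat.factorial_succ, show d-1+1 = d by omega]
      rw [hl, hfd, Nat.factorial_succ, ← hc]
      ring
    have keyR : (((d-1).choose (α 0) : ℝ)) * ((α 0).factorial * (α 1).factorial) * d
        = (α 1) * d.factorial := by exact_mod_cast key
    rw [h0] at keyR ⊢
    rw [hl] at keyR ⊢
    field_simp
    push_cast at keyR ⊢
    simp only [Nat.choose_zero_right, Nat.factorial_zero, Nat.cast_one, one_mul] at keyR ⊢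
    linear_combination (coeff α P * τ 1 * x 1 ^ l) * keyR
  · rw [if_pos (by simp [Finsupp.mem_support_iff, h0]),
      if_neg (by simp [Finsupp.mem_support_iff, h1]),
      coeff_Lin_pow, e00, e01, if_pos (by omega)]
    obtain ⟨m, hm⟩ : ∃ m, α 0 = m + 1 := ⟨α 0 - 1, by omega⟩
    have key : ((d-1).choose (α 0 - 1) * ((α 0).factorial * (α 1).factorial) * d : ℕ)
        = α 0 * d.factorial := by
      have h1' : m ≤ d - 1 := by omega
      have hc := Nat.choose_mul_factorial_mul_factorial h1'
      rw [show d - 1 - m = α 1 by omega] at hc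
      have hfd : d.factorial = d * (d-1).factorial := by
        conv_lhs => rw [show d = (d-1)+1 by omega]
        rw [Nat.factorial_succ, show d-1+1 = d by omega]
      rw [hm, hfd, Nat.factorial_succ, Nat.add_sub_cancel, ← hc]
      ring
    have keyR : (((d-1).choose (α 0 - 1) : ℝ)) * ((α 0).factorial * (α 1).factorial) * d
        = (α 0) * d.factorial := by exact_mod_cast key
    rw [h1] at keyR ⊢
    rw [hm] at keyR ⊢
    simp only [Nat.add_sub_cancel] at keyR ⊢
    field_simp
    push_cast at keyR ⊢
    simp only [Nat.factorial_zero, Nat.cast_one, mul_one] at keyR ⊢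
    linear_combination (coeff α P * τ 0 * x 0 ^ m) * keyR
  · rw [if_pos (by simp [Finsupp.mem_support_iff, h0]),
      if_pos (by simp [Finsupp.mem_support_iff, h1]),
      coeff_Lin_pow, coeff_Lin_pow, e00, e01, e10, e11,
      if_pos (by omega), if_pos (by omega)]
    obtain ⟨m, hm⟩ : ∃ m, α 0 = m + 1 := ⟨α 0 - 1, by omega⟩
    obtain ⟨l, hl⟩ : ∃ l, α 1 = l + 1 := ⟨α 1 - 1, by omega⟩
    have hfd : d.factorial = d * (d-1).factorial := by
      conv_lhs => rw [show d = (d-1)+1 by omega]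
      rw [Nat.factorial_succ, show d-1+1 = d by omega]
    have key0 : ((d-1).choose (α 0 - 1) * ((α 0).factorial * (α 1).factorial) * d : ℕ)
        = α 0 * d.factorial := by
      have h1' : m ≤ d - 1 := by omega
      have hc := Nat.choose_mul_factorial_mul_factorial h1'
      rw [show d - 1 - m = α 1 by omega] at hc
      rw [hm, hfd, Nat.factorial_succ, Nat.add_sub_cancel, ← hc]
      ring
    have key1 : ((d-1).choose (α 0) * ((α 0).factorial * (α 1).factorial) * d : ℕ)
        = α 1 * d.factorial := by
      have h1' : α 0 ≤ d - 1 := by omega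
      have hc := Nat.choose_mul_factorial_mul_factorial h1'
      rw [show d - 1 - α 0 = l by omega] at hc
      rw [hl, hfd, Nat.factorial_succ, ← hc]
      ring
    have keyR0 : (((d-1).choose (α 0 - 1) : ℝ)) * ((α 0).factorial * (α 1).factorial) * d
        = (α 0) * d.factorial := by exact_mod_cast key0
    have keyR1 : (((d-1).choose (α 0) : ℝ)) * ((α 0).factorial * (α 1).factorial) * d
        = (α 1) * d.factorial := by exact_mod_cast key1
    rw [hm, hl] at keyR0 keyR1 ⊢
    simp only [Nat.add_sub_cancel] at keyR0 keyR1 ⊢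
    field_simp
    push_cast at keyR0 keyR1 ⊢
    linear_combination (coeff α P * τ 0 * x 0 ^ m * x 1 ^ (l+1)) * keyR0
      + (coeff α P * τ 1 * x 0 ^ (m+1) * x 1 ^ l) * keyR1

lemma hasDerivAt_eval2 (f g : ℝ → ℝ) (f' g' : ℝ) (t : ℝ)
    (hf : HasDerivAt f f' t) (hg : HasDerivAt g g' t) (P : MvPolynomial (Fin 2) ℝ) :
    HasDerivAt (fun s => eval ![f s, g s] P)
      (eval ![f t, g t] (pderiv 0 P) * f' + eval ![f t, g t] (pderiv 1 P) * g') t := by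
  induction P using MvPolynomial.induction_on with
  | C a =>
    simp only [eval_C, pderiv_C, map_zero, zero_mul, add_zero, zero_add]
    exact hasDerivAt_const t a
  | add p q hp hq =>
    simp only [map_add]
    exact (hp.add hq).congr_deriv (by ring)
  | mul_X p i hp =>
    fin_cases i
    · simp only [Fin.isValue, show (⟨0, by omega⟩ : Fin 2) = 0 from rfl] at *
      have key : HasDerivAt (fun s => eval ![f s, g s] p * f s)
          ((eval ![f t, g t] (pderiv 0 p) * f' + eval ![f t, g t] (pderiv 1 p) * g') * f t
            + eval ![f t, g t] p * f') t := hp.mul hf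
      refine HasDerivAt.congr_deriv (key.congr_of_eventuallyEq ?_) ?_
      · filter_upwards with s
        simp
      · simp only [pderiv_mul, pderiv_X_self, pderiv_X_of_ne (by decide : (0:Fin 2) ≠ 1)]
        simp
        ring
    · simp only [Fin.isValue, show (⟨1, by omega⟩ : Fin 2) = 1 from rfl] at *
      have key : HasDerivAt (fun s => eval ![f s, g s] p * g s)
          ((eval ![f t, g t] (pderiv 0 p) * f' + eval ![f t, g t] (pderiv 1 p) * g') * g t
            + eval ![f t, g t] p * g') t := hp.mul hg
      refine HasDerivAt.congr_deriv (key.congr_of_eventuallyEq ?_) ?_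
      · filter_upwards with s
        simp
      · simp only [pderiv_mul, pderiv_X_self, pderiv_X_of_ne (by decide : (1:Fin 2) ≠ 0)]
        simp
        ring

end DistAux

open DistAux

set_option maxHeartbeats 2000000 in
/-- for `2 ≤ d`, `1 ≤ r ≤ d` with `d - r` even, the homogeneous polynomial
`T` of degree `d` in two variables with `T(cos θ, sin θ) = cos(r θ)` satisfies
`dist(T,Δ) = min (1, r/√d)`. -/
theorem distDisc_T_rd (d r : ℕ) (hd : 2 ≤ d) (hr : 1 ≤ r) (hrd : r ≤ d)
    (he : Even (d - r))
    (T : MvPolynomial (Fin 2) ℝ) (hT : T.IsHomogeneous d)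
    (hcos : ∀ θ : ℝ, eval ![Real.cos θ, Real.sin θ] T = Real.cos (r * θ)) :
    distDisc 2 d T = min 1 (r / Real.sqrt d) := by
  have hd1 : 1 ≤ d := by omega
  have hdR : (0:ℝ) < d := by exact_mod_cast Nat.pos_of_ne_zero (by omega)
  have hrR : (0:ℝ) < r := by exact_mod_cast hr
  have hsd : (0:ℝ) < Real.sqrt d := Real.sqrt_pos.mpr hdR
  set m := min 1 ((r:ℝ) / Real.sqrt d) with hm
  have hm0 : 0 ≤ m := le_min (by norm_num) (by positivity)
  -- gradient of T on the circle
  have hpd : ∀ θ : ℝ,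
      eval ![Real.cos θ, Real.sin θ] (pderiv 0 T)
        = d * Real.cos (r*θ) * Real.cos θ + r * Real.sin (r*θ) * Real.sin θ ∧
      eval ![Real.cos θ, Real.sin θ] (pderiv 1 T)
        = d * Real.cos (r*θ) * Real.sin θ - r * Real.sin (r*θ) * Real.cos θ := by
    intro θ
    have hE := euler_eval d ![Real.cos θ, Real.sin θ] T hT
    simp only [Matrix.cons_val_zero, Matrix.cons_val_one, Matrix.head_cons] at hE
    rw [hcos θ] at hE
    -- chain rule
    have h1 := hasDerivAt_eval2 Real.cos Real.sin (-Real.sin θ) (Real.cos θ) θ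
      (Real.hasDerivAt_cos θ) (Real.hasDerivAt_sin θ) T
    have hfun : (fun s => eval ![Real.cos s, Real.sin s] T) = fun s => Real.cos (r * s) := by
      funext s; exact hcos s
    rw [hfun] at h1
    have h2 : HasDerivAt (fun s => Real.cos ((r:ℝ) * s)) (-Real.sin ((r:ℝ)*θ) * ((r:ℝ)*1)) θ :=
      (Real.hasDerivAt_cos _).comp θ ((hasDerivAt_id θ).const_mul _)
    have hC := h1.unique h2
    constructor
    · linear_combination (Real.cos θ) * hE - (Real.sin θ) * hC
        - eval ![Real.cos θ, Real.sin θ] (pderiv 0 T) * (Real.sin_sq_add_cos_sq θ)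
    · linear_combination (Real.sin θ) * hE + (Real.cos θ) * hC
        - eval ![Real.cos θ, Real.sin θ] (pderiv 1 T) * (Real.sin_sq_add_cos_sq θ)
  -- the set
  set S : Set ℝ := {s | ∃ Q ∈ realDisc 2 d, s = bombieriNorm 2 d (T - Q)} with hS
  -- lower bound
  have hlow : ∀ s ∈ S, m ≤ s := by
    rintro s ⟨Q, ⟨hQhom, x, hx1, hQ0, hQd⟩, rfl⟩
    rw [Fin.sum_univ_two] at hx1
    -- parametrize x
    have hz : (⟨x 0, x 1⟩ : ℂ) ≠ 0 := by
      intro h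
      rw [Complex.ext_iff] at h
      simp at h
      nlinarith [h.1, h.2]
    have habs : ‖(⟨x 0, x 1⟩ : ℂ)‖ = 1 := by
      rw [Complex.norm_def, Complex.normSq_mk]
      rw [show x 0 * x 0 + x 1 * x 1 = 1 by nlinarith]
      exact Real.sqrt_one
    set θ := Complex.arg ⟨x 0, x 1⟩ with hθ
    have hc : Real.cos θ = x 0 := by
      rw [hθ, Complex.cos_arg hz, habs]; simp
    have hs : Real.sin θ = x 1 := by
      rw [hθ, Complex.sin_arg, habs]; simp
    have hxv : ![Real.cos θ, Real.sin θ] = x := by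
      funext i; fin_cases i <;> simp [hc, hs]
    set τ : Fin 2 → ℝ := ![-(x 1), x 0] with hτ
    have hτ0 : τ 0 = -(x 1) := by simp [hτ]
    have hτ1 : τ 1 = x 0 := by simp [hτ]
    set R : MvPolynomial (Fin 2) ℝ := T - Q with hR
    have hRhom : R.IsHomogeneous d :=
      (homogeneousSubmodule (Fin 2) ℝ d).sub_mem hT hQhom
    set p : MvPolynomial (Fin 2) ℝ := (Lin x)^d with hp
    set q : MvPolynomial (Fin 2) ℝ := (Lin x)^(d-1) * Lin τ with hq
    have hqhom : q.IsHomogeneous d := by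
      have := ((Lin_homog x).pow (d-1)).mul (Lin_homog τ)
      rwa [show 1*(d-1)+1 = d by omega] at this
    -- values of T at x
    have hTx : eval x T = Real.cos (r*θ) := by rw [← hxv]; exact hcos θ
    have hT0 : eval x (pderiv 0 T)
        = d * Real.cos (r*θ) * x 0 + r * Real.sin (r*θ) * x 1 := by
      rw [← hxv, (hpd θ).1, hc, hs]; simp
    have hT1 : eval x (pderiv 1 T)
        = d * Real.cos (r*θ) * x 1 - r * Real.sin (r*θ) * x 0 := by
      rw [← hxv, (hpd θ).2, hc, hs]; simp
    -- inner products
    have ha : bombieriInner 2 d R p = Real.cos (r*θ) := by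
      rw [hp, B_p d x R hRhom, hR, map_sub, hTx, hQ0, sub_zero]
    have hb : bombieriInner 2 d R q = -(r * Real.sin (r*θ)) / d := by
      rw [hq, B_q d hd1 x τ R hRhom]
      rw [hR]
      simp only [map_sub]
      rw [hQd 0, hQd 1, sub_zero, sub_zero, hT0, hT1, hτ0, hτ1]
      congr 1
      linear_combination (-((r:ℝ) * Real.sin ((r:ℝ) * θ))) * hx1
    have hpp : bombieriInner 2 d p p = 1 := by
      rw [hp, B_p d x ((Lin x)^d) (by simpa using (Lin_homog x).pow d)]
      rw [map_pow, eval_Lin]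
      rw [show x 0 * x 0 + x 1 * x 1 = 1 by nlinarith]
      exact one_pow d
    have hqp : bombieriInner 2 d q p = 0 := by
      rw [hp, B_p d x q hqhom, hq, map_mul, map_pow, eval_Lin, eval_Lin]
      rw [hτ0, hτ1]
      ring
    have hpq : bombieriInner 2 d p q = 0 := by rw [B_symm]; exact hqp
    have hqq : bombieriInner 2 d q q = 1 / d := by
      rw [hq, B_q d hd1 x τ q hqhom]
      have hpdq : ∀ i : Fin 2, eval x (pderiv i q) = τ i := by
        intro i
        rw [hq, pderiv_mul, pderiv_pow, pderiv_Lin]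
        have hLτ : eval x (Lin τ) = 0 := by rw [eval_Lin, hτ0, hτ1]; ring
        have hLx : eval x (Lin x) = 1 := by rw [eval_Lin]; nlinarith
        simp [hLτ, hLx, pderiv_Lin]
      rw [hpdq 0, hpdq 1, hτ0, hτ1]
      rw [show -(x 1) * -(x 1) + x 0 * x 0 = 1 by nlinarith]
    -- Cauchy-Schwarz style bound
    set a : ℝ := Real.cos (r*θ) with haa
    set b : ℝ := -(r * Real.sin (r*θ)) / d with hbb
    have hkey : a^2 + d * b^2 ≤ bombieriInner 2 d R R := by
      set u : MvPolynomial (Fin 2) ℝ := R + (C (-a) * p + C (-(d*b)) * q) with hu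
      have hBu : 0 ≤ bombieriInner 2 d u u := B_nonneg d u
      have expand : bombieriInner 2 d u u
          = bombieriInner 2 d R R - a^2 - d * b^2 := by
        rw [hu]
        simp only [B_add_left, B_add_right, B_C_mul_left, B_C_mul_right]
        rw [B_symm d p R, B_symm d q R]
        rw [ha, hb, hpp, hqq, hpq, hqp]
        rw [hbb]
        field_simp
        ring
      linarith [expand ▸ hBu]
    -- conclude
    have hval : m^2 ≤ a^2 + d * b^2 := by
      have h1 : m ≤ 1 := min_le_left _ _
      have h2 : m ≤ (r:ℝ) / Real.sqrt d := min_le_right _ _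
      have h2' : m^2 ≤ (r:ℝ)^2 / d := by
        have : ((r:ℝ) / Real.sqrt d)^2 = (r:ℝ)^2 / d := by
          rw [div_pow, Real.sq_sqrt (le_of_lt hdR)]
        rw [← this]
        exact pow_le_pow_left₀ hm0 h2 2
      have h1' : m^2 ≤ 1 := by nlinarith
      have hab : a^2 + d * b^2 = a^2 + (r:ℝ)^2 / d * (Real.sin (r*θ))^2 := by
        rw [hbb]
        field_simp
      rw [hab, haa]
      nlinarith [Real.sin_sq_add_cos_sq ((r:ℝ)*θ), sq_nonneg (Real.sin ((r:ℝ)*θ)),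
        sq_nonneg (Real.cos ((r:ℝ)*θ))]
    have : m^2 ≤ bombieriInner 2 d R R := le_trans hval hkey
    calc m = Real.sqrt (m^2) := (Real.sqrt_sq hm0).symm
      _ ≤ Real.sqrt (bombieriInner 2 d R R) := Real.sqrt_le_sqrt this
      _ = bombieriNorm 2 d (T - Q) := rfl
  -- membership: the minimum is attained
  have hmem : m ∈ S := by
    rcases le_or_gt (d:ℝ) ((r:ℝ)^2) with hcase | hcase
    · -- m = 1, use Q = T - (Lin x)^d at x = (1,0)
      have hm1 : m = 1 := by
        rw [hm]
        apply min_eq_left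
        rw [le_div_iff₀ hsd]
        rw [one_mul]
        calc Real.sqrt d ≤ Real.sqrt ((r:ℝ)^2) := Real.sqrt_le_sqrt hcase
          _ = r := Real.sqrt_sq (le_of_lt hrR)
      set x : Fin 2 → ℝ := ![1, 0] with hx
      have hx0 : x 0 = 1 := by simp [hx]
      have hx1 : x 1 = 0 := by simp [hx]
      set p : MvPolynomial (Fin 2) ℝ := (Lin x)^d with hp
      have hphom : p.IsHomogeneous d := by simpa using (Lin_homog x).pow d
      have hxv : ![Real.cos 0, Real.sin 0] = x := by
        funext i; fin_cases i <;> simp [hx]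
      have hTx : eval x T = 1 := by
        rw [← hxv, hcos 0]
        simp
      have hT0 : eval x (pderiv 0 T) = d := by
        rw [← hxv, (hpd 0).1]
        simp
      have hT1 : eval x (pderiv 1 T) = 0 := by
        rw [← hxv, (hpd 0).2]
        simp
      refine ⟨T - p, ⟨(homogeneousSubmodule (Fin 2) ℝ d).sub_mem hT hphom, x, ?_, ?_, ?_⟩, ?_⟩
      · rw [Fin.sum_univ_two, hx0, hx1]; norm_num
      · rw [map_sub, hTx, hp, map_pow, eval_Lin, hx0, hx1]
        norm_num
      · have hLx : eval x (Lin x) = 1 := by rw [eval_Lin, hx0, hx1]; norm_num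
        rw [Fin.forall_fin_two]
        constructor
        · rw [map_sub, map_sub, hp, pderiv_pow, pderiv_Lin, hT0]
          simp [hLx, hx0]
        · rw [map_sub, map_sub, hp, pderiv_pow, pderiv_Lin, hT1]
          simp [hLx, hx1]
      · rw [sub_sub_cancel, hm1]
        unfold bombieriNorm
        rw [B_p d x p hphom, hp, map_pow, eval_Lin, hx0, hx1]
        norm_num
    · -- m = r/√d, use Q = T + r * q at θ₀ = π/(2r)
      have hrsd : (r:ℝ) ≤ Real.sqrt d := by
        calc (r:ℝ) = Real.sqrt ((r:ℝ)^2) := (Real.sqrt_sq (le_of_lt hrR)).symm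
          _ ≤ Real.sqrt d := Real.sqrt_le_sqrt (le_of_lt hcase)
      have hm1 : m = (r:ℝ) / Real.sqrt d := by
        rw [hm]
        apply min_eq_right
        rw [div_le_one hsd]
        exact hrsd
      set θ₀ : ℝ := Real.pi / (2*r) with hθ₀
      have hrθ : (r:ℝ) * θ₀ = Real.pi / 2 := by
        rw [hθ₀]; field_simp
      have hcrθ : Real.cos ((r:ℝ)*θ₀) = 0 := by rw [hrθ, Real.cos_pi_div_two]
      have hsrθ : Real.sin ((r:ℝ)*θ₀) = 1 := by rw [hrθ, Real.sin_pi_div_two]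
      set x : Fin 2 → ℝ := ![Real.cos θ₀, Real.sin θ₀] with hx
      have hx0 : x 0 = Real.cos θ₀ := by simp [hx]
      have hx1 : x 1 = Real.sin θ₀ := by simp [hx]
      have hxx : x 0 * x 0 + x 1 * x 1 = 1 := by
        rw [hx0, hx1]; nlinarith [Real.sin_sq_add_cos_sq θ₀]
      set τ : Fin 2 → ℝ := ![-Real.sin θ₀, Real.cos θ₀] with hτ
      have hτ0 : τ 0 = -Real.sin θ₀ := by simp [hτ]
      have hτ1 : τ 1 = Real.cos θ₀ := by simp [hτ]
      set q : MvPolynomial (Fin 2) ℝ := (Lin x)^(d-1) * Lin τ with hq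
      have hqhom : q.IsHomogeneous d := by
        have := ((Lin_homog x).pow (d-1)).mul (Lin_homog τ)
        rwa [show 1*(d-1)+1 = d by omega] at this
      have hTx : eval x T = 0 := by
        rw [hx, hcos θ₀, hcrθ]
      have hT0 : eval x (pderiv 0 T) = -(r:ℝ) * τ 0 := by
        rw [hx, (hpd θ₀).1, hcrθ, hsrθ, hτ0]; ring
      have hT1 : eval x (pderiv 1 T) = -(r:ℝ) * τ 1 := by
        rw [hx, (hpd θ₀).2, hcrθ, hsrθ, hτ1]; ring
      have hevq : eval x q = 0 := by
        rw [hq, map_mul, map_pow, eval_Lin, eval_Lin, hxx, hτ0, hτ1]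
        rw [hx0, hx1]
        ring
      have hpdq : ∀ i : Fin 2, eval x (pderiv i q) = τ i := by
        intro i
        rw [hq, pderiv_mul, pderiv_pow, pderiv_Lin]
        have hLτ : eval x (Lin τ) = 0 := by
          rw [eval_Lin, hτ0, hτ1, hx0, hx1]; ring
        have hLx : eval x (Lin x) = 1 := by rw [eval_Lin, hxx]
        simp [hLτ, hLx, pderiv_Lin]
      refine ⟨T + C (r:ℝ) * q,
        ⟨hT.add (hqhom.C_mul (r:ℝ)), x, ?_, ?_, ?_⟩, ?_⟩
      · rw [Fin.sum_univ_two]; nlinarith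
      · rw [map_add, hTx, map_mul, eval_C, hevq]; ring
      · rw [Fin.forall_fin_two]
        constructor
        · rw [map_add, pderiv_C_mul, map_add, map_mul, eval_C, hpdq 0, hT0]; ring
        · rw [map_add, pderiv_C_mul, map_add, map_mul, eval_C, hpdq 1, hT1]; ring
      · rw [show T - (T + C (r:ℝ) * q) = -(C (r:ℝ) * q) by ring, hm1]
        unfold bombieriNorm
        rw [B_neg_left, B_neg_right, neg_neg, B_C_mul_left, B_C_mul_right]
        have hqq : bombieriInner 2 d q q = 1 / d := by
          rw [hq, B_q d hd1 x τ q hqhom]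
          rw [hpdq 0, hpdq 1, hτ0, hτ1]
          rw [show -Real.sin θ₀ * -Real.sin θ₀ + Real.cos θ₀ * Real.cos θ₀ = 1 by
            nlinarith [Real.sin_sq_add_cos_sq θ₀]]
        rw [hqq]
        rw [show (r:ℝ) * ((r:ℝ) * (1/d)) = (r:ℝ)^2 / d by ring]
        rw [Real.sqrt_div (sq_nonneg (r:ℝ)), Real.sqrt_sq (le_of_lt hrR)]
  -- conclude
  rw [distDisc]
  exact le_antisymm (csInf_le ⟨m, hlow⟩ hmem) (le_csInf ⟨m, hmem⟩ hlow)
end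

section
/- Let d and r be positive integers with d/3 < r ≤ d and d − r even. Then for every real θ: cos(r θ) = (2^{d−1} / (r · C(d, (d−r)/2))) · Σ_{k=0}^{r−1} (−1)^k · cos^d(θ − kπ/r). In particular, taking r = d: cos(d θ) = (2^{d−1}/d) · Σ_{k=0}^{d−1} (−1)^k · cos^d(θ − kπ/d). -/
open Finset Real

private lemma two_cos_pow (d : ℕ) (x : ℂ) :
    (2 * Complex.cos x) ^ d =
      ∑ j ∈ Finset.range (d + 1), (d.choose j : ℂ) *
        Complex.exp (((2 * (j : ℤ) - (d : ℤ) : ℤ) : ℂ) * (Complex.I * x)) := by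
  have h2 : 2 * Complex.cos x = Complex.exp (Complex.I * x) + Complex.exp (-(Complex.I * x)) := by
    rw [Complex.cos]; ring_nf
  rw [h2, add_pow]
  refine Finset.sum_congr rfl fun j hj => ?_
  have hjd : j ≤ d := Nat.lt_succ_iff.mp (Finset.mem_range.mp hj)
  rw [← Complex.exp_nat_mul, ← Complex.exp_nat_mul, ← Complex.exp_add]
  have : (j : ℂ) * (Complex.I * x) + (↑(d - j) : ℂ) * -(Complex.I * x)
      = ((2 * (j:ℤ) - (d:ℤ) : ℤ) : ℂ) * (Complex.I * x) := by
    push_cast [Nat.cast_sub hjd]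
    ring
  rw [this]
  ring

private lemma geom_part (r : ℕ) (hr : 0 < r) (m : ℤ) (hpar : Even ((r:ℤ) - m)) :
    ∑ k ∈ Finset.range r, (-1:ℂ)^k * Complex.exp (-((m:ℂ) * Complex.I * k * (Real.pi:ℂ)) / r)
      = if (2*(r:ℤ)) ∣ ((r:ℤ) - m) then (r:ℂ) else 0 := by
  have hrC : (r:ℂ) ≠ 0 := Nat.cast_ne_zero.mpr hr.ne'
  have hπ : (Real.pi:ℂ) ≠ 0 := Complex.ofReal_ne_zero.mpr Real.pi_ne_zero
  set w : ℂ := Complex.exp (Complex.I * (Real.pi:ℂ) * (((r:ℤ) - m : ℤ):ℂ) / r) with hw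
  have hterm : ∀ k ∈ Finset.range r,
      (-1:ℂ)^k * Complex.exp (-((m:ℂ) * Complex.I * k * (Real.pi:ℂ)) / r) = w ^ k := by
    intro k _
    rw [hw, ← Complex.exp_nat_mul]
    have : (k:ℂ) * (Complex.I * (Real.pi:ℂ) * (((r:ℤ) - m : ℤ):ℂ) / r)
        = (k:ℂ) * ((Real.pi:ℂ) * Complex.I) + -((m:ℂ) * Complex.I * k * (Real.pi:ℂ)) / r := by
      push_cast
      field_simp
      ring
    rw [this, Complex.exp_add, Complex.exp_nat_mul, Complex.exp_pi_mul_I]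
  rw [Finset.sum_congr rfl hterm]
  by_cases hdvd : (2*(r:ℤ)) ∣ ((r:ℤ) - m)
  · obtain ⟨t, ht⟩ := hdvd
    have hw1 : w = 1 := by
      rw [hw, Complex.exp_eq_one_iff]
      refine ⟨t, ?_⟩
      rw [ht]
      push_cast
      field_simp
    rw [if_pos ⟨t, ht⟩]
    simp [hw1]
  · have hwr : w ^ r = 1 := by
      rw [hw, ← Complex.exp_nat_mul]
      have : (r:ℂ) * (Complex.I * (Real.pi:ℂ) * (((r:ℤ) - m : ℤ):ℂ) / r)
          = (((r:ℤ) - m : ℤ):ℂ) * ((Real.pi:ℂ) * Complex.I) := by field_simp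
      rw [this, Complex.exp_int_mul, Complex.exp_pi_mul_I, hpar.neg_one_zpow]
    have hwne : w ≠ 1 := by
      intro h1
      rw [hw, Complex.exp_eq_one_iff] at h1
      obtain ⟨n, hn⟩ := h1
      apply hdvd
      refine ⟨n, ?_⟩
      have h2 : (((r:ℤ) - m : ℤ):ℂ) = ((2 * (r:ℤ) * n : ℤ):ℂ) := by
        field_simp at hn
        push_cast
        have key : Complex.I * (Real.pi:ℂ) * ((r:ℂ) - m) = Complex.I * (Real.pi:ℂ) * (2 * r * n) := by
          push_cast at hn; linear_combination (Complex.I * (Real.pi:ℂ)) * hn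
        exact mul_left_cancel₀ (mul_ne_zero Complex.I_ne_zero hπ) key
      exact_mod_cast h2
    rw [geom_sum_eq hwne, hwr]
    simp [hdvd]

private lemma main_complex (d r : ℕ) (hd : 0 < d) (hr : 0 < r)
    (hlt : d < 3 * r) (hle : r ≤ d) (he : Even (d - r)) (θ : ℝ) :
    ∑ k ∈ Finset.range r, (-1:ℂ)^k *
        (2 * Complex.cos ((θ:ℂ) - k * (Real.pi:ℂ) / r)) ^ d
      = 2 * r * (d.choose ((d - r)/2) : ℂ) * Complex.cos (r * (θ:ℂ)) := by
  have hrC : (r:ℂ) ≠ 0 := Nat.cast_ne_zero.mpr hr.ne'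
  set u := (d - r) / 2 with hu
  have hu2 : 2 * u = d - r := Nat.two_mul_div_two_of_even he
  have hdz : (d:ℤ) = 2 * u + r := by omega
  have hpar : ∀ j : ℕ, Even ((r:ℤ) - (2*(j:ℤ) - (d:ℤ))) := by
    intro j
    exact ⟨(u:ℤ) + r - j, by omega⟩
  -- expand and swap
  have hswap : ∑ k ∈ Finset.range r, (-1:ℂ)^k *
        (2 * Complex.cos ((θ:ℂ) - k * (Real.pi:ℂ) / r)) ^ d
      = ∑ j ∈ Finset.range (d+1),
          (d.choose j : ℂ) * Complex.exp (((2*(j:ℤ) - (d:ℤ) : ℤ):ℂ) * (Complex.I * θ)) *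
          ∑ k ∈ Finset.range r, (-1:ℂ)^k *
            Complex.exp (-((((2*(j:ℤ) - (d:ℤ) : ℤ):ℂ)) * Complex.I * k * (Real.pi:ℂ)) / r) := by
    have h1 : ∀ k ∈ Finset.range r, (-1:ℂ)^k *
          (2 * Complex.cos ((θ:ℂ) - k * (Real.pi:ℂ) / r)) ^ d
        = ∑ j ∈ Finset.range (d+1),
            ((d.choose j : ℂ) * Complex.exp (((2*(j:ℤ) - (d:ℤ) : ℤ):ℂ) * (Complex.I * θ))) *
            ((-1:ℂ)^k * Complex.exp (-((((2*(j:ℤ) - (d:ℤ) : ℤ):ℂ)) * Complex.I * k * (Real.pi:ℂ)) / r)) := by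
      intro k _
      rw [two_cos_pow, Finset.mul_sum]
      refine Finset.sum_congr rfl fun j _ => ?_
      have harg : ((2*(j:ℤ)-(d:ℤ):ℤ):ℂ) * (Complex.I * ((θ:ℂ) - k*(Real.pi:ℂ)/r))
          = ((2*(j:ℤ)-(d:ℤ):ℤ):ℂ) * (Complex.I*θ) + -((((2*(j:ℤ)-(d:ℤ):ℤ):ℂ))*Complex.I*k*(Real.pi:ℂ))/r := by
        field_simp
        ring
      rw [harg, Complex.exp_add]
      ring
    rw [Finset.sum_congr rfl h1, Finset.sum_comm]
    exact Finset.sum_congr rfl fun j _ => (Finset.mul_sum _ _ _).symm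
  rw [hswap]
  have hval : ∀ j ∈ Finset.range (d+1),
      (d.choose j : ℂ) * Complex.exp (((2*(j:ℤ) - (d:ℤ) : ℤ):ℂ) * (Complex.I * θ)) *
          ∑ k ∈ Finset.range r, (-1:ℂ)^k *
            Complex.exp (-((((2*(j:ℤ) - (d:ℤ) : ℤ):ℂ)) * Complex.I * k * (Real.pi:ℂ)) / r)
      = (d.choose j : ℂ) * Complex.exp (((2*(j:ℤ) - (d:ℤ) : ℤ):ℂ) * (Complex.I * θ)) *
          (if (2*(r:ℤ)) ∣ ((r:ℤ) - (2*(j:ℤ) - (d:ℤ))) then (r:ℂ) else 0) := by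
    intro j _
    rw [geom_part r hr _ (hpar j)]
  rw [Finset.sum_congr rfl hval]
  rw [Finset.sum_eq_add u (u + r) (by omega)]
  · have hdvd1 : (2*(r:ℤ)) ∣ ((r:ℤ) - (2*(u:ℤ) - (d:ℤ))) := ⟨1, by omega⟩
    have hdvd2 : (2*(r:ℤ)) ∣ ((r:ℤ) - (2*((u:ℕ)+r : ℕ) - (d:ℤ))) := ⟨0, by push_cast; omega⟩
    rw [if_pos hdvd1]
    rw [if_pos (by push_cast at hdvd2 ⊢; omega : (2*(r:ℤ)) ∣ ((r:ℤ) - (2*(((u+r):ℕ):ℤ) - (d:ℤ))))]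
    have hch : (d.choose (u + r) : ℂ) = (d.choose u : ℂ) := by
      norm_cast
      rw [← Nat.choose_symm (show u + r ≤ d by omega)]
      congr 1
      omega
    rw [hch]
    have he1 : Complex.exp (((2*(u:ℤ) - (d:ℤ) : ℤ):ℂ) * (Complex.I * θ))
        = Complex.exp (-(Complex.I * ((r:ℂ) * θ))) := by
      congr 1
      have : (2*(u:ℤ) - (d:ℤ) : ℤ) = -(r:ℤ) := by omega
      rw [this]
      push_cast
      ring
    have he2 : Complex.exp (((2*(((u+r):ℕ):ℤ) - (d:ℤ) : ℤ):ℂ) * (Complex.I * θ))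
        = Complex.exp (Complex.I * ((r:ℂ) * θ)) := by
      congr 1
      have : (2*(((u+r):ℕ):ℤ) - (d:ℤ) : ℤ) = (r:ℤ) := by push_cast; omega
      rw [this]
      push_cast
      ring
    rw [he1, he2]
    have hcos : 2 * Complex.cos ((r:ℂ) * θ)
        = Complex.exp (Complex.I * ((r:ℂ) * θ)) + Complex.exp (-(Complex.I * ((r:ℂ) * θ))) := by
      rw [Complex.cos]; ring_nf
    linear_combination (-((d.choose u : ℂ)) * (r:ℂ)) * hcos
  · intro j hj ⟨hj1, hj2⟩
    rw [if_neg, mul_zero]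
    rintro ⟨t, ht⟩
    have hjd : (j:ℤ) ≤ d := by exact_mod_cast Nat.lt_succ_iff.mp (Finset.mem_range.mp hj)
    have hrz : (0:ℤ) < r := by exact_mod_cast hr
    have ht1 : t ≤ 1 := by nlinarith [hjd, hrz, ht]
    have ht0 : 0 ≤ t := by nlinarith [hjd, hrz, ht, (show (0:ℤ) ≤ j by positivity), (show (d:ℤ) < 3*r by exact_mod_cast hlt)]
    interval_cases t
    · exact hj2 (by omega)
    · exact hj1 (by omega)
  · intro h; exact absurd (Finset.mem_range.mpr (by omega)) h
  · intro h; exact absurd (Finset.mem_range.mpr (by omega)) h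

/-- for positive integers `d`, `r` with `d/3 < r ≤ d` and `d - r` even,
`cos(rθ) = (2^(d-1) / (r·C(d,(d-r)/2))) · Σ_{k=0}^{r-1} (-1)^k cos^d(θ - kπ/r)`. -/
theorem cos_eq_sum_pow_cos (d r : ℕ) (hd : 0 < d) (hr : 0 < r)
    (hlt : d < 3 * r) (hle : r ≤ d) (he : Even (d - r)) (θ : ℝ) :
    Real.cos (r * θ) =
      (2 ^ (d - 1) / (r * (d.choose ((d - r) / 2)) : ℝ)) *
        ∑ k ∈ Finset.range r, (-1 : ℝ) ^ k * Real.cos (θ - k * Real.pi / r) ^ d := by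
  have hC : 0 < d.choose ((d - r) / 2) := Nat.choose_pos (by omega)
  have key := main_complex d r hd hr hlt hle he θ
  have h2 : ∀ k ∈ Finset.range r, (-1:ℂ)^k *
        (2 * Complex.cos ((θ:ℂ) - k * (Real.pi:ℂ) / r)) ^ d
      = (2:ℂ)^d * (((-1:ℝ)^k * Real.cos (θ - k * Real.pi / r)^d : ℝ) : ℂ) := by
    intro k _
    rw [mul_pow]
    push_cast
    ring
  rw [Finset.sum_congr rfl h2, ← Finset.mul_sum] at key
  have keyR : (2:ℝ)^d * (∑ k ∈ Finset.range r, (-1:ℝ)^k * Real.cos (θ - k * Real.pi / r)^d)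
      = 2 * r * (d.choose ((d - r)/2)) * Real.cos (r * θ) := by
    exact_mod_cast key
  have hp : (2:ℝ)^d = 2^(d-1) * 2 := by
    rw [← pow_succ]
    congr 1
    omega
  rw [hp] at keyR
  have hr0 : (r:ℝ) ≠ 0 := Nat.cast_ne_zero.mpr hr.ne'
  have hC0 : ((d.choose ((d - r)/2) : ℕ) : ℝ) ≠ 0 := Nat.cast_ne_zero.mpr hC.ne'
  rw [div_mul_eq_mul_div, eq_div_iff (by positivity : ((r:ℝ) * (d.choose ((d - r)/2)) : ℝ) ≠ 0)]
  linear_combination -keyR / 2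
end

section
/- Let d and r be positive integers with d/3 < r ≤ d and d − r even. Then for every real θ: sin(r θ) = (2^{d−1} / (r · C(d, (d−r)/2))) · Σ_{k=0}^{r−1} (−1)^k · cos^d(θ − (2k+1)π/(2r)). In particular, taking r = d: sin(d θ) = (2^{d−1}/d) · Σ_{k=0}^{d−1} (−1)^k · cos^d(θ − (2k+1)π/(2d)). -/
open Finset Real Complex

lemma cos_pow_expand (n : ℕ) (w : ℂ) :
    Complex.cos w ^ n =
      (∑ j ∈ Finset.range (n+1), (n.choose j : ℂ) *
        Complex.exp (((2*(j:ℤ) - n : ℤ) : ℂ) * (w * I))) / 2 ^ n := by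
  rw [Complex.cos, div_pow, add_pow]
  congr 1
  refine Finset.sum_congr rfl fun j hj => ?_
  have hj' : j ≤ n := Nat.lt_succ_iff.mp (Finset.mem_range.mp hj)
  rw [← Complex.exp_nat_mul, ← Complex.exp_nat_mul, ← Complex.exp_add, mul_comm]
  congr 2
  push_cast [Nat.cast_sub hj']
  ring


lemma my_inner_sum (r : ℕ) (hr : 0 < r) (m : ℤ) (z : ℂ)
    (hpar : Even (m + r)) (hb : m.natAbs < 3 * r) :
    ∑ k ∈ Finset.range r, (-1:ℂ)^k *
        Complex.exp ((m:ℂ) * ((z - (2*(k:ℕ)+1)*(Real.pi:ℂ)/(2*r)) * I))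
      = if m = r ∨ m = -r then
          (r:ℂ) * Complex.exp ((m:ℂ) * ((z - (Real.pi:ℂ)/(2*r)) * I)) else 0 := by
  have hr0 : (r:ℂ) ≠ 0 := Nat.cast_ne_zero.mpr hr.ne'
  have hπ : (Real.pi:ℂ) ≠ 0 := by exact_mod_cast Real.pi_ne_zero
  set c : ℂ := -((m:ℂ) * Real.pi / r * I) with hc
  have hsplit : ∀ k ∈ Finset.range r,
      (-1:ℂ)^k * Complex.exp ((m:ℂ) * ((z - (2*(k:ℕ)+1)*(Real.pi:ℂ)/(2*r)) * I))
      = Complex.exp ((m:ℂ) * ((z - (Real.pi:ℂ)/(2*r)) * I)) * (-Complex.exp c)^k := by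
    intro k _
    have hne : (-Complex.exp c)^k = (-1:ℂ)^k * Complex.exp c ^ k := neg_pow _ _
    have he : Complex.exp ((m:ℂ) * ((z - (2*(k:ℕ)+1)*(Real.pi:ℂ)/(2*r)) * I))
        = Complex.exp ((m:ℂ) * ((z - (Real.pi:ℂ)/(2*r)) * I)) * Complex.exp c ^ k := by
      rw [← Complex.exp_nat_mul, ← Complex.exp_add]
      congr 1
      rw [hc]
      field_simp
      ring
    rw [he, hne]
    ring
  rw [Finset.sum_congr rfl hsplit, ← Finset.mul_sum]
  by_cases hm : m = r ∨ m = -r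
  · have hec : Complex.exp c = -1 := by
      rcases hm with h | h
      · have : c = -(Real.pi * I) := by rw [hc, h]; field_simp; norm_cast
        rw [this, Complex.exp_neg, Complex.exp_pi_mul_I]
        norm_num
      · have : c = Real.pi * I := by rw [hc, h]; push_cast; field_simp
        rw [this, Complex.exp_pi_mul_I]
    rw [if_pos hm, hec]
    norm_num [mul_comm]
  · rw [if_neg hm]
    have hne : -Complex.exp c ≠ 1 := by
      intro h
      have h2 : Complex.exp (c + Real.pi * I) = 1 := by
        rw [Complex.exp_add, Complex.exp_pi_mul_I]
        linear_combination h
      obtain ⟨nn, hn⟩ := Complex.exp_eq_one_iff.mp h2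
      rw [hc] at hn
      have h3 : (r:ℂ) * (-((m:ℂ) * Real.pi / r * I) + Real.pi * I)
          = (r:ℂ) * ((nn:ℂ) * (2 * Real.pi * I)) := by rw [hn]
      have h4 : ((-m + r : ℤ) : ℂ) * (Real.pi * I) = ((2*nn*r : ℤ):ℂ) * (Real.pi * I) := by
        field_simp at h3
        push_cast
        linear_combination (Real.pi * I) * h3
      have h5 : (-m + r : ℤ) = 2*nn*r := by
        have := mul_right_cancel₀ (mul_ne_zero hπ I_ne_zero) h4
        exact_mod_cast this
      have keyZ : m = (r:ℤ) * (1 - 2*nn) := by linear_combination -h5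
      set q : ℤ := 1 - 2*nn with hq
      have habs : m.natAbs = r * q.natAbs := by
        rw [keyZ, Int.natAbs_mul]; simp
      have hq3 : q.natAbs < 3 := by
        rw [habs, mul_comm 3 r] at hb
        exact Nat.lt_of_mul_lt_mul_left hb
      have hq1 : q = 1 ∨ q = -1 := by omega
      rcases hq1 with h1 | h1 <;> rw [h1] at keyZ
      · exact hm (Or.inl (by omega))
      · exact hm (Or.inr (by omega))
    rw [geom_sum_eq hne]
    have hpow : (-Complex.exp c)^r = 1 := by
      have h1 : (-Complex.exp c)^r = (-1:ℂ)^r * Complex.exp ((r:ℂ) * c) := by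
        rw [neg_pow, Complex.exp_nat_mul]
      have h2 : (r:ℂ) * c = (-m : ℤ) * (Real.pi * I) := by
        rw [hc]; push_cast; field_simp
      rw [h1, h2, Complex.exp_int_mul, Complex.exp_pi_mul_I]
      rw [show ((-1:ℂ)^r = (-1:ℂ)^(r:ℤ)) from (zpow_natCast _ _).symm,
        ← zpow_add₀ (by norm_num : (-1:ℂ) ≠ 0)]
      refine Even.neg_one_zpow ?_
      obtain ⟨t, ht⟩ := hpar
      exact ⟨r - t, by omega⟩
    rw [hpow]
    simp

lemma my_aux (r a : ℕ) (hr : 0 < r) (ha : a < r) (z : ℂ) :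
    ∑ k ∈ Finset.range r, (-1:ℂ)^k *
        Complex.cos (z - (2*(k:ℕ)+1)*(Real.pi:ℂ)/(2*r)) ^ (r + 2*a)
      = 2 * r * ((r + 2*a).choose a) * Complex.sin (r * z) / 2 ^ (r + 2*a) := by
  set n := r + 2*a with hn
  have h1 : ∀ k ∈ Finset.range r,
      (-1:ℂ)^k * Complex.cos (z - (2*(k:ℕ)+1)*(Real.pi:ℂ)/(2*r)) ^ n
      = (∑ j ∈ Finset.range (n+1), (n.choose j : ℂ) *
          ((-1:ℂ)^k * Complex.exp (((2*(j:ℤ) - n : ℤ):ℂ)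
            * ((z - (2*(k:ℕ)+1)*(Real.pi:ℂ)/(2*r)) * I)))) / 2 ^ n := by
    intro k _
    rw [cos_pow_expand, ← mul_div_assoc]
    congr 1
    rw [Finset.mul_sum]
    refine Finset.sum_congr rfl fun j _ => by ring
  rw [Finset.sum_congr rfl h1, ← Finset.sum_div, Finset.sum_comm]
  
  have h2 : ∀ j ∈ Finset.range (n+1),
      ∑ k ∈ Finset.range r, (n.choose j : ℂ) *
        ((-1:ℂ)^k * Complex.exp (((2*(j:ℤ) - n : ℤ):ℂ)
          * ((z - (2*(k:ℕ)+1)*(Real.pi:ℂ)/(2*r)) * I)))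
      = (if j = a then ((n.choose a : ℂ) * ((r:ℂ) *
            Complex.exp (((-r : ℤ):ℂ) * ((z - (Real.pi:ℂ)/(2*r)) * I)))) else 0)
        + (if j = a + r then ((n.choose a : ℂ) * ((r:ℂ) *
            Complex.exp (((r : ℤ):ℂ) * ((z - (Real.pi:ℂ)/(2*r)) * I)))) else 0) := by
    intro j hj
    have hj' : j ≤ n := Nat.lt_succ_iff.mp (Finset.mem_range.mp hj)
    rw [← Finset.mul_sum]
    have hjn : j ≤ r + 2*a := by rw [← hn]; exact hj'
    rw [my_inner_sum r hr (2*(j:ℤ) - n) z ⟨(j:ℤ) - a, by push_cast [hn]; ring⟩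
      (by simp only [hn]; push_cast; omega)]
    by_cases hja : j = a
    · have hm : (2*(j:ℤ) - n) = -r := by rw [hja, hn]; push_cast; ring
      rw [if_pos (Or.inr hm), hm, if_pos hja, if_neg (show ¬ j = a + r by omega), hja]
      push_cast
      ring
    · by_cases hjar : j = a + r
      · have hm : (2*(j:ℤ) - n) = r := by rw [hjar, hn]; push_cast; ring
        rw [if_pos (Or.inl hm), hm, if_neg hja, if_pos hjar, hjar]
        have hch : n.choose (a + r) = n.choose a := by
          rw [show a + r = n - a by omega]
          exact Nat.choose_symm (by omega)
        rw [hch]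
        push_cast
        ring
      · rw [if_neg hja, if_neg hjar, if_neg, mul_zero, add_zero]
        rintro (h | h) <;> [exact hjar (by omega); exact hja (by omega)]
  rw [Finset.sum_congr rfl h2, Finset.sum_add_distrib,
    Finset.sum_ite_eq' (Finset.range (n+1)) a,
    Finset.sum_ite_eq' (Finset.range (n+1)) (a+r),
    if_pos (Finset.mem_range.mpr (by omega)), if_pos (Finset.mem_range.mpr (by omega))]
  have hr0 : (r:ℂ) ≠ 0 := Nat.cast_ne_zero.mpr hr.ne'
  have hw : Complex.exp (((-r : ℤ):ℂ) * ((z - (Real.pi:ℂ)/(2*r)) * I))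
        + Complex.exp (((r : ℤ):ℂ) * ((z - (Real.pi:ℂ)/(2*r)) * I))
      = 2 * Complex.sin (r * z) := by
    have harg : ((r : ℤ):ℂ) * ((z - (Real.pi:ℂ)/(2*r)) * I) = ((r:ℂ)*z - (Real.pi:ℂ)/2) * I := by
      push_cast; field_simp
    have harg' : ((-r : ℤ):ℂ) * ((z - (Real.pi:ℂ)/(2*r)) * I) = -(((r:ℂ)*z - (Real.pi:ℂ)/2) * I) := by
      push_cast; field_simp
    rw [harg, harg', ← Complex.cos_sub_pi_div_two ((r:ℂ)*z), Complex.cos]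
    ring
  rw [div_eq_div_iff (pow_ne_zero _ two_ne_zero) (pow_ne_zero _ two_ne_zero)]
  linear_combination ((n.choose a : ℂ)) * (r:ℂ) * (2:ℂ)^n * hw


/-- for positive integers `d`, `r` with `d/3 < r ≤ d` and `d - r` even,
`sin(rθ) = (2^(d-1) / (r·C(d,(d-r)/2))) · Σ_{k=0}^{r-1} (-1)^k cos^d(θ - (2k+1)π/(2r))`. -/
theorem sin_eq_sum_pow_cos (d r : ℕ) (hd : 0 < d) (hr : 0 < r)
    (hlt : d < 3 * r) (hle : r ≤ d) (he : Even (d - r)) (θ : ℝ) :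
    Real.sin (r * θ) =
      (2 ^ (d - 1) / (r * (d.choose ((d - r) / 2)) : ℝ)) *
        ∑ k ∈ Finset.range r, (-1 : ℝ) ^ k *
          Real.cos (θ - (2 * k + 1) * Real.pi / (2 * r)) ^ d := by
  obtain ⟨a, ha2⟩ := he
  have hd2 : d = r + 2 * a := by omega
  have ha : a < r := by omega
  have hdr2 : (d - r) / 2 = a := by omega
  have key : ∑ k ∈ Finset.range r, (-1 : ℝ) ^ k *
      Real.cos (θ - (2 * k + 1) * Real.pi / (2 * r)) ^ d
      = 2 * r * (d.choose a) * Real.sin (r * θ) / 2 ^ d := by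
    have h := my_aux r a hr ha (θ : ℂ)
    rw [← hd2] at h
    rw [← Complex.ofReal_inj]
    push_cast
    convert h using 2
  rw [hdr2, key]
  have hC : (0:ℝ) < d.choose a := by
    exact_mod_cast Nat.choose_pos (by omega : a ≤ d)
  have h2d : (2:ℝ) ^ d = 2 ^ (d-1) * 2 := by
    rw [← pow_succ, Nat.sub_add_cancel hd]
  have hr0 : (0:ℝ) < r := by exact_mod_cast hr
  field_simp
  rw [h2d]
  ring
end
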